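/- arXiv:1402.5361 — 3 statements merged into one kernel-verified Lean document; each statement's English description precedes it below -/
import Mathlib

section
/- Let d and s be integers with 7 ≤ ⌊d/2⌋ + 1 ≤ s ≤ d - 4, set g_s(d) = C(s-1, 2) + C(d-s, 2), and let 1 ≤ i ≤ d - s - 3. If s - 1 - C(d-s, 2) + i > 0, then the integer g_s(d) - i is a gap in R_d. -/
/-- The Macaulay bound `a^⟨t⟩`: if `a = C(k_t,t) + C(k_{t-1},t-1) + ⋯ + C(k_j,j)` is the
binomial expansion of `a` in base `t`, then `a^⟨t⟩ = C(k_t+1,t+1) + ⋯ + C(k_j+1,j+1)`.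
Computed greedily; `mac t a = a^⟨t⟩` for `t ≥ 1`. -/
def mac : ℕ → ℕ → ℕ
  | 0, _ => 0
  | t+1, a =>
    if a = 0 then 0
    else
      Nat.choose (Nat.findGreatest (fun n => Nat.choose n (t+1) ≤ a) (a + t + 1) + 1) (t+2) +
        mac t (a - Nat.choose (Nat.findGreatest (fun n => Nat.choose n (t+1) ≤ a) (a + t + 1)) (t+1))

/-- `h : ℕ → ℕ` is a finite O-sequence of length `s`: `h 0 = 1`, the entries `h 0, …, h (s-1)`
are positive, entries from index `s` on are zero, and `h (t+1) ≤ (h t)^⟨t⟩` for all `t ≥ 1`. -/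
def IsOSeq (h : ℕ → ℕ) (s : ℕ) : Prop :=
  h 0 = 1 ∧ (∀ i, 0 < h i ↔ i < s) ∧ ∀ t, 1 ≤ t → h (t + 1) ≤ mac t (h t)

/-- The multiplicity `e(h) = h_0 + ⋯ + h_{s-1}` of a finite O-sequence of length `s`. -/
def mult (h : ℕ → ℕ) (s : ℕ) : ℕ := ∑ i ∈ Finset.range s, h i

/-- The genus `g(h) = Σ_{j=2}^{s-1} (j-1)·h_j` of a finite O-sequence of length `s`. -/
def genus (h : ℕ → ℕ) (s : ℕ) : ℕ := ∑ j ∈ Finset.range s, (j - 1) * h j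

/-- The sequence obtained from `h` by increasing the `i`-th entry by `1`, i.e. `h + e_i`. -/
def addE (h : ℕ → ℕ) (i : ℕ) : ℕ → ℕ := fun j => if j = i then h j + 1 else h j

/-- The sequence obtained from `h` by decreasing the `i`-th entry by `1`, i.e. `h - e_i`. -/
def subE (h : ℕ → ℕ) (i : ℕ) : ℕ → ℕ := fun j => if j = i then h j - 1 else h j

/-- The total order on finite O-sequences of the same length: `oLT h k` iff `h_ℓ < k_ℓ`
where `ℓ = max{ j : h_j ≠ k_j }`. -/
def oLT (h k : ℕ → ℕ) : Prop := ∃ ℓ, h ℓ < k ℓ ∧ ∀ j, ℓ < j → h j = k j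

/-- The set of genera of finite O-sequences of multiplicity `d` and length `s`. -/
def genusSet (d s : ℕ) : Set ℕ := {g | ∃ h, IsOSeq h s ∧ mult h s = d ∧ genus h s = g}

/-- `G_d`: the set of genera of finite O-sequences of multiplicity `d` (of any length). -/
def GSet (d : ℕ) : Set ℕ := {g | ∃ h s, IsOSeq h s ∧ mult h s = d ∧ genus h s = g}

/-- `g` is a gap in `R_d = [0, C(d-1,2)]`: it lies in the range but is not the genus of any
finite O-sequence of multiplicity `d`. -/
def IsGap (d g : ℕ) : Prop :=
  g ≤ Nat.choose (d - 1) 2 ∧ ∀ h s, IsOSeq h s → mult h s = d → genus h s ≠ g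

/-- The O-sequence `(1, d-s+1, 1^{s-2})`, minimal in `𝒢_d^s`. -/
def minSeq (d s : ℕ) : ℕ → ℕ :=
  fun j => if j = 0 then 1 else if j = 1 then d - s + 1 else if j < s then 1 else 0

/-- The O-sequence `(1, 2^{d-s}, 1^{2s-d-1})`, maximal in `𝒢_d^s`. -/
def maxSeq (d s : ℕ) : ℕ → ℕ :=
  fun j => if j = 0 then 1 else if j ≤ d - s then 2 else if j < s then 1 else 0

/-- The O-sequence `(1, d-1)`. -/
def twoSeq (d : ℕ) : ℕ → ℕ := fun j => if j = 0 then 1 else if j = 1 then d - 1 else 0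

/-- The operation `h ↦ h - e_{s-1} + e_1` on a sequence of length `s`. -/
def downUp (h : ℕ → ℕ) (s : ℕ) : ℕ → ℕ :=
  fun j => if j = s - 1 then h j - 1 else if j = 1 then h j + 1 else h j

/-- The largest index `1 ≤ j ≤ s-1` with `h j > 1` (and `0` if there is none). -/
def topIdx (h : ℕ → ℕ) (s : ℕ) : ℕ := Nat.findGreatest (fun j => 1 < h j) (s - 1)

/-- The operation `h ↦ h - e_i + e_1` where `i = topIdx h s`. -/
def shiftDown (h : ℕ → ℕ) (s : ℕ) : ℕ → ℕ :=
  fun j => if j = topIdx h s then h j - 1 else if j = 1 then h j + 1 else h j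

/-- Auxiliary list `[m_n, m_{n-1}, …, m_1]` for the recursively defined sequence `(m_d)`. -/
def mListAux : ℕ → List ℕ
  | 0 => []
  | n+1 =>
    let prev := mListAux n
    let newVal :=
      if n = 0 then 0
      else
        (List.range' 2 (n - 1)).foldl
          (fun M k =>
            if Nat.choose k 2 - 1 ≤ M then max M (prev.getD (k - 1) 0 + Nat.choose k 2) else M)
          (prev.getD 0 0)
    newVal :: prev

/-- The sequence `(m_d)_{d ≥ 1}`: `m_1 = 0` and, for `d ≥ 2`, `m_d` is obtained from
`M := m_{d-1}` by running over `k = 2, …, d-1` and replacing `M` by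
`max M (m_{d-k} + C(k,2))` whenever `C(k,2) - 1 ≤ M`. -/
def mSeq (d : ℕ) : ℕ := (mListAux d).getD 0 0

/-!
Macaulay's bound fixes every `a ≤ t`, so an entry `h_j ≤ j` of an O-sequence is never exceeded
later on. Hence an O-sequence of length `x + 1` with `h_1 ≥ 2` has the profile
`(1, h_1, ≥ 3 on (1, m], 2 on (m, k], 1 on (k, x])`; its multiplicity is
`h_1 + x + k + m + S - 2` and its genus `C(x,2) + C(k,2) + C(m,2) + W`, where
`S = Σ_{(1,m]} (h_j - 3)` and `W = Σ_{(1,m]} (j - 1)(h_j - 3) ≤ (m - 1) S`.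

Write `E = d - s`; the hypothesis `C(E,2) < s - 1 + i` forces `s ≥ E + i + 3`. An O-sequence of
length at least `s + 1` has genus at least `C(s,2) = C(s-1,2) + s - 1`, above the target. For
length at most `s - 1`, the bound `C(m,2) + W ≤ k (m - 1 + S)` leaves a quadratic inequality in
`x` and `k` which puts the genus below the target. For length exactly `s`, `k + m + S ≤ E + 1`:
if `m = 1` the genus is `C(s-1,2) + C(k,2)` with `k ≤ E`, and if `m ≥ 2` it is at most
`C(s-1,2) + C(E-1,2) + 1`; neither is `C(s-1,2) + C(E,2) - i`, as `1 ≤ i ≤ E - 3`.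
-/

open Finset

theorem sum_range_succ_eq_add_sum_Ioc (f : ℕ → ℕ) (x : ℕ) :
    ∑ j ∈ range (x + 1), f j = f 0 + ∑ j ∈ Ioc 0 x, f j := by
  rw [Nat.range_succ_eq_Icc_zero, Icc_eq_cons_Ioc (Nat.zero_le x), sum_cons]

theorem sum_range_succ_eq_blocks (f : ℕ → ℕ) {x k m : ℕ} (hm : 1 ≤ m) (hmk : m ≤ k)
    (hkx : k ≤ x) :
    ∑ j ∈ range (x + 1), f j =
      f 0 + f 1 + ∑ j ∈ Ioc 1 m, f j + ∑ j ∈ Ioc m k, f j + ∑ j ∈ Ioc k x, f j := by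
  rw [sum_range_succ_eq_add_sum_Ioc, ← sum_Ioc_consecutive f (Nat.zero_le 1) (by omega),
    ← sum_Ioc_consecutive f hm (hmk.trans hkx), ← sum_Ioc_consecutive f hmk hkx,
    Nat.Ioc_succ_singleton, sum_singleton]
  ring

theorem sum_Ioc_sub_one_add_choose_two {a b : ℕ} (hab : a ≤ b) :
    ∑ j ∈ Ioc a b, (j - 1) + a.choose 2 = b.choose 2 := by
  induction b, hab using Nat.le_induction with
  | base => simp
  | succ b hab ih =>
    rw [sum_Ioc_succ_top hab, Nat.choose_succ_succ', Nat.choose_one_right, ← ih]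
    omega

theorem sum_Ioc_sub_one_mul_add_choose_two_mul {a b : ℕ} (c : ℕ) (hab : a ≤ b) :
    ∑ j ∈ Ioc a b, (j - 1) * c + a.choose 2 * c = b.choose 2 * c := by
  rw [← sum_mul, ← add_mul, sum_Ioc_sub_one_add_choose_two hab]

theorem sum_Ioc_sub_one_mul_le (f : ℕ → ℕ) (a m : ℕ) :
    ∑ j ∈ Ioc a m, (j - 1) * f j ≤ (m - 1) * ∑ j ∈ Ioc a m, f j := by
  rw [mul_sum]
  exact sum_le_sum fun j hj => Nat.mul_le_mul_right _ (by rw [mem_Ioc] at hj; omega)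

theorem choose_two_eq_choose_two_sub_one_add {n : ℕ} (hn : 1 ≤ n) :
    n.choose 2 = (n - 1).choose 2 + (n - 1) := by
  obtain ⟨n, rfl⟩ : ∃ n', n = n' + 1 := ⟨n - 1, by omega⟩
  rw [Nat.add_sub_cancel, Nat.choose_succ_succ', Nat.choose_one_right, add_comm]

theorem choose_two_add_choose_two_le (a b : ℕ) :
    a.choose 2 + b.choose 2 ≤ (a + b).choose 2 := by
  qify
  simp only [Nat.cast_choose_two]
  push_cast
  nlinarith [(by positivity : (0 : ℚ) ≤ a * b)]

theorem choose_two_add_le_mul {k m S W : ℕ} (hmk : m ≤ k) (hW : W ≤ (m - 1) * S) :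
    m.choose 2 + W ≤ k * (m - 1 + S) := by
  have hm : m.choose 2 ≤ k * (m - 1) := by
    rw [Nat.choose_two_right]
    exact Nat.div_le_of_le_mul (by nlinarith [Nat.mul_le_mul_right (m - 1) hmk])
  nlinarith [Nat.mul_le_mul_right S (show m - 1 ≤ k by omega)]

theorem choose_two_add_choose_two_add_le {k m S W : ℕ} (hm : 2 ≤ m) (hmk : m ≤ k)
    (hW : W ≤ (m - 1) * S) : k.choose 2 + m.choose 2 + W ≤ (k + m + S - 2).choose 2 + 1 := by
  obtain ⟨m, rfl⟩ : ∃ m', m = m' + 2 := ⟨m - 2, by omega⟩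
  rw [show k + (m + 2) + S - 2 = k + m + S by omega]
  rw [show m + 2 - 1 = m + 1 by omega] at hW
  have hk : (m : ℚ) + 2 ≤ k := by exact_mod_cast hmk
  qify at hW ⊢
  simp only [Nat.cast_choose_two]
  push_cast
  nlinarith [mul_nonneg (sub_nonneg.mpr hk) (by positivity : (0 : ℚ) ≤ m + S),
    (by positivity : (0 : ℚ) ≤ m * S), (by positivity : (0 : ℚ) ≤ S * S)]

theorem choose_two_add_choose_two_add_mul_add_lt {t E i x k q : ℕ} (hkx : k ≤ x)
    (hxt : x + 1 ≤ t) (hsum : k + x + q ≤ t + E) (hEt : E + i + 2 ≤ t) :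
    x.choose 2 + k.choose 2 + k * q + i < t.choose 2 + E.choose 2 := by
  qify at *
  simp only [Nat.cast_choose_two]
  -- at the extreme values `q = t + E - k - x` and `i = t - E - 2`, twice the gap is
  -- `(k - E)² - (k - E) + a² - a + 2 + 2ab` for `a = t - 1 - x`, `b = x - k`
  nlinarith [mul_nonneg (by linarith : (0 : ℚ) ≤ t - 1 - x) (by linarith : (0 : ℚ) ≤ x - k),
    mul_nonneg (by linarith : (0 : ℚ) ≤ t + E - k - x - q) (by positivity : (0 : ℚ) ≤ k),
    sq_nonneg ((k : ℚ) - E - 1 / 2), sq_nonneg ((t : ℚ) - 1 - x - 1 / 2)]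

theorem choose_two_add_choose_two_add_ne {E i k m S W : ℕ} (hi : 1 ≤ i) (hiE : i + 3 ≤ E)
    (hm : 1 ≤ m) (hmk : m ≤ k) (hW : W ≤ (m - 1) * S) (hsum : k + m + S ≤ E + 1) :
    k.choose 2 + m.choose 2 + W + i ≠ E.choose 2 := by
  have hE := choose_two_eq_choose_two_sub_one_add (n := E) (by omega)
  rcases hm.eq_or_lt with rfl | hm
  · have hW0 : W = 0 := by simpa using hW
    have h1 : (1 : ℕ).choose 2 = 0 := Nat.choose_eq_zero_of_lt one_lt_two
    rcases (show k ≤ E - 1 ∨ k = E by omega) with hk | rfl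
    · have := Nat.choose_le_choose 2 hk
      omega
    · omega
  · have := choose_two_add_choose_two_add_le hm hmk hW
    have := Nat.choose_le_choose 2 (show k + m + S - 2 ≤ E - 1 by omega)
    omega

theorem mac_eq_self_of_le {t a : ℕ} (h : a ≤ t) : mac t a = a := by
  induction t generalizing a with
  | zero => simp_all [mac]
  | succ t ih =>
    rcases Nat.eq_zero_or_pos a with rfl | ha
    · simp [mac]
    have hk : Nat.findGreatest (fun n => n.choose (t + 1) ≤ a) (a + t + 1) = t + 1 := by
      refine Nat.findGreatest_eq_iff.mpr ⟨by omega, fun _ => (Nat.choose_self _).trans_le ha, fun n hn hna => ?_⟩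
      have : t + 2 ≤ n.choose (t + 1) :=
        (Nat.choose_succ_self_right (t + 1)).symm.le.trans (Nat.choose_le_choose _ (by omega))
      omega
    rw [mac, if_neg ha.ne', hk, Nat.choose_self, Nat.choose_self]
    rcases Nat.eq_zero_or_pos t with rfl | ht
    · simp [mac, show a = 1 by omega]
    · rw [ih (by omega)]
      omega

namespace IsOSeq

variable {h : ℕ → ℕ} {ℓ : ℕ}

theorem pos (hO : IsOSeq h ℓ) {j : ℕ} (hj : j < ℓ) : 0 < h j := (hO.2.1 j).2 hj

theorem length_pos (hO : IsOSeq h ℓ) : 0 < ℓ := (hO.2.1 0).1 (by simp [hO.1])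

theorem apply_le_of_apply_le_self (hO : IsOSeq h ℓ) {j n : ℕ} (hj : 1 ≤ j) (hhj : h j ≤ j)
    (hjn : j ≤ n) : h n ≤ h j := by
  induction n, hjn using Nat.le_induction with
  | base => rfl
  | succ n hjn ih =>
    calc h (n + 1) ≤ mac n (h n) := hO.2.2 n (by omega)
      _ = h n := mac_eq_self_of_le (by omega)
      _ ≤ h j := ih

theorem le_apply_of_le_apply (hO : IsOSeq h ℓ) {r j n : ℕ} (hj : 1 ≤ j) (hrj : r ≤ j + 1)
    (hjn : j ≤ n) (hrn : r ≤ h n) : r ≤ h j := by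
  by_contra! hlt
  have := hO.apply_le_of_apply_le_self hj (by omega) hjn
  omega

theorem two_le_apply_one (hO : IsOSeq h ℓ) (hℓ : ℓ < mult h ℓ) : 2 ≤ h 1 := by
  by_contra! h1
  have hle : ∀ j ∈ range ℓ, h j ≤ 1 := fun j _ => by
    rcases Nat.eq_zero_or_pos j with rfl | hj
    · exact hO.1.le
    · exact (hO.apply_le_of_apply_le_self le_rfl (by omega) hj).trans (by omega)
  have := sum_le_sum hle
  simp only [sum_const, card_range, smul_eq_mul, mul_one] at this
  exact hℓ.not_ge this

theorem choose_two_le_genus (hO : IsOSeq h ℓ) : (ℓ - 1).choose 2 ≤ genus h ℓ := by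
  obtain ⟨x, rfl⟩ : ∃ x, ℓ = x + 1 := ⟨ℓ - 1, by have := hO.length_pos; omega⟩
  calc (x + 1 - 1).choose 2 = ∑ j ∈ range (x + 1), (j - 1) := by
        rw [sum_range_succ_eq_add_sum_Ioc, Nat.add_sub_cancel,
          ← sum_Ioc_sub_one_add_choose_two (Nat.zero_le x)]
        simp
    _ ≤ genus h (x + 1) :=
        sum_le_sum fun j hj => Nat.le_mul_of_pos_right _ (hO.pos (mem_range.mp hj))

end IsOSeq

structure HasProfile (h : ℕ → ℕ) (x k m : ℕ) : Prop where
  apply_zero : h 0 = 1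
  one_le_m : 1 ≤ m
  m_le_k : m ≤ k
  k_le_x : k ≤ x
  three_le : ∀ j ∈ Ioc 1 m, 3 ≤ h j
  eq_two : ∀ j ∈ Ioc m k, h j = 2
  eq_one : ∀ j ∈ Ioc k x, h j = 1

theorem IsOSeq.exists_hasProfile {h : ℕ → ℕ} {x : ℕ} (hO : IsOSeq h (x + 1))
    (h1 : 2 ≤ h 1) :
    ∃ k m, HasProfile h x k m := by
  have hx : 1 ≤ x := by have := (hO.2.1 1).1 (by omega); omega
  set k := Nat.findGreatest (fun j => 2 ≤ h j) x
  -- `m = 1` when no entry beyond `h 1` reaches `3`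
  set m := Nat.findGreatest (fun j => j = 1 ∨ 3 ≤ h j) x
  have hk2 : 2 ≤ h k := Nat.findGreatest_spec (P := fun j => 2 ≤ h j) hx h1
  have hm3 : m = 1 ∨ 3 ≤ h m :=
    Nat.findGreatest_spec (P := fun j => j = 1 ∨ 3 ≤ h j) hx (.inl rfl)
  have hm1 : 1 ≤ m := Nat.le_findGreatest hx (.inl rfl)
  refine ⟨k, m, hO.1, hm1, ?_, Nat.findGreatest_le x, fun j hj => ?_, fun j hj => ?_,
    fun j hj => ?_⟩
  · rcases hm3 with hm3 | hm3
    · exact hm3 ▸ Nat.le_findGreatest hx h1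
    · exact Nat.le_findGreatest (Nat.findGreatest_le x) (by omega)
  · rw [mem_Ioc] at hj
    exact hO.le_apply_of_le_apply (by omega) (by omega) hj.2 (hm3.resolve_left (by omega))
  · rw [mem_Ioc] at hj
    have hj2 := hO.le_apply_of_le_apply (by omega) (by omega) hj.2 hk2
    have hj3 := Nat.findGreatest_is_greatest hj.1 (hj.2.trans (Nat.findGreatest_le x))
    omega
  · rw [mem_Ioc] at hj
    have hj2 := Nat.findGreatest_is_greatest hj.1 hj.2
    have hj1 := hO.pos (j := j) (by omega)
    omega

namespace HasProfile

variable {h : ℕ → ℕ} {x k m : ℕ}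

theorem mult_add_two (hP : HasProfile h x k m) :
    mult h (x + 1) + 2 = h 1 + x + k + m + ∑ j ∈ Ioc 1 m, (h j - 3) := by
  have h3 : ∑ j ∈ Ioc 1 m, h j = ∑ j ∈ Ioc 1 m, (h j - 3) + (m - 1) * 3 := by
    rw [← Nat.card_Ioc, ← smul_eq_mul, ← sum_const, ← sum_add_distrib]
    exact sum_congr rfl fun j hj => by have := hP.three_le j hj; omega
  have h2 : ∑ j ∈ Ioc m k, h j = (k - m) * 2 := by
    rw [sum_congr rfl hP.eq_two, sum_const, Nat.card_Ioc, smul_eq_mul]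
  have h1 : ∑ j ∈ Ioc k x, h j = (x - k) * 1 := by
    rw [sum_congr rfl hP.eq_one, sum_const, Nat.card_Ioc, smul_eq_mul]
  rw [mult, sum_range_succ_eq_blocks h hP.one_le_m hP.m_le_k hP.k_le_x, h3, h2, h1, hP.apply_zero]
  have := hP.one_le_m; have := hP.m_le_k; have := hP.k_le_x
  omega

theorem genus_eq (hP : HasProfile h x k m) :
    genus h (x + 1) =
      x.choose 2 + k.choose 2 + m.choose 2 + ∑ j ∈ Ioc 1 m, (j - 1) * (h j - 3) := by
  have h3 : ∑ j ∈ Ioc 1 m, (j - 1) * h j =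
      ∑ j ∈ Ioc 1 m, (j - 1) * (h j - 3) + ∑ j ∈ Ioc 1 m, (j - 1) * 3 := by
    rw [← sum_add_distrib]
    exact sum_congr rfl fun j hj => by rw [← mul_add, Nat.sub_add_cancel (hP.three_le j hj)]
  have h3' := sum_Ioc_sub_one_mul_add_choose_two_mul 3 hP.one_le_m
  have h2 : ∑ j ∈ Ioc m k, (j - 1) * h j + m.choose 2 * 2 = k.choose 2 * 2 := by
    rw [sum_congr rfl fun j hj => by rw [hP.eq_two j hj]]
    exact sum_Ioc_sub_one_mul_add_choose_two_mul 2 hP.m_le_k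
  have h1 : ∑ j ∈ Ioc k x, (j - 1) * h j + k.choose 2 * 1 = x.choose 2 * 1 := by
    rw [sum_congr rfl fun j hj => by rw [hP.eq_one j hj]]
    exact sum_Ioc_sub_one_mul_add_choose_two_mul 1 hP.k_le_x
  rw [genus, sum_range_succ_eq_blocks _ hP.one_le_m hP.m_le_k hP.k_le_x, h3]
  simp only [Nat.choose_eq_zero_of_lt one_lt_two] at h3'
  omega

end HasProfile

theorem IsOSeq.genus_add_ne_of_lt {h : ℕ → ℕ} {x s E i : ℕ} (hO : IsOSeq h (x + 1))
    (hxs : x < s) (hmult : mult h (x + 1) = s + E) (hi : 1 ≤ i) (hiE : i + 3 ≤ E)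
    (hs : E + i + 3 ≤ s) : genus h (x + 1) + i ≠ (s - 1).choose 2 + E.choose 2 := by
  have h1 := hO.two_le_apply_one (by omega)
  obtain ⟨k, m, hP⟩ := hO.exists_hasProfile h1
  have hmult' := hP.mult_add_two
  have hW := sum_Ioc_sub_one_mul_le (fun j => h j - 3) 1 m
  have := hP.one_le_m; have := hP.m_le_k; have := hP.k_le_x
  rw [hP.genus_eq]
  rcases (show x + 1 < s ∨ x = s - 1 by omega) with hxs | rfl
  · have := choose_two_add_choose_two_add_mul_add_lt (t := s - 1) (E := E) (i := i)
      (q := m - 1 + ∑ j ∈ Ioc 1 m, (h j - 3)) hP.k_le_x (by omega) (by omega) (by omega)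
    have := choose_two_add_le_mul hP.m_le_k hW
    omega
  · have := choose_two_add_choose_two_add_ne hi hiE hP.one_le_m hP.m_le_k hW (by omega)
    omega

theorem stmt13_general (d s i : ℕ) (h7 : 7 ≤ d / 2 + 1)
    (hi1 : 1 ≤ i) (hi2 : i ≤ d - s - 3)
    (hcond : Nat.choose (d - s) 2 < s - 1 + i) :
    IsGap d (Nat.choose (s - 1) 2 + Nat.choose (d - s) 2 - i) := by
  obtain ⟨E, rfl⟩ : ∃ E, d = s + E := ⟨d - s, by omega⟩
  rw [Nat.add_sub_cancel_left] at hi2 hcond ⊢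
  have hiE : i + 3 ≤ E := by omega
  have hE := choose_two_eq_choose_two_sub_one_add (n := E) (by omega)
  have hs : E + i + 3 ≤ s := by
    rcases (show E = 4 ∨ 5 ≤ E by omega) with rfl | hE5
    · omega
    · have : (5 : ℚ) ≤ E := by exact_mod_cast hE5
      have : 3 * E ≤ E.choose 2 + 5 := by
        qify
        rw [Nat.cast_choose_two]
        nlinarith
      omega
  refine ⟨?_, fun h ℓ hO hmult hgen => ?_⟩
  · have := choose_two_add_choose_two_le (s - 1) E
    rw [show s - 1 + E = s + E - 1 by omega] at this
    omega
  obtain ⟨x, rfl⟩ : ∃ x, ℓ = x + 1 := ⟨ℓ - 1, by have := hO.length_pos; omega⟩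
  rcases lt_or_ge x s with hxs | hsx
  · exact hO.genus_add_ne_of_lt hxs hmult hi1 hiE hs (by omega)
  · have hgenus := hO.choose_two_le_genus
    rw [Nat.add_sub_cancel] at hgenus
    have := Nat.choose_le_choose 2 hsx
    have := choose_two_eq_choose_two_sub_one_add (n := s) (by omega)
    omega

/-- Let `7 ≤ ⌊d/2⌋ + 1 ≤ s ≤ d - 4`, `g_s(d) = C(s-1,2) + C(d-s,2)` and
`1 ≤ i ≤ d - s - 3`. If `s - 1 - C(d-s,2) + i > 0` (i.e. `C(d-s,2) < s - 1 + i`), then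
`g_s(d) - i` is a gap in `R_d`. -/
theorem stmt13 (d s i : ℕ) (h7 : 7 ≤ d / 2 + 1) (hs1 : d / 2 + 1 ≤ s) (hs2 : s ≤ d - 4)
    (hi1 : 1 ≤ i) (hi2 : i ≤ d - s - 3)
    (hcond : Nat.choose (d - s) 2 < s - 1 + i) :
    IsGap d (Nat.choose (s - 1) 2 + Nat.choose (d - s) 2 - i) :=
  stmt13_general d s i h7 hi1 hi2 hcond
end

section
/- Let d and j be integers with 1 ≤ j ≤ d - 1. If g is the genus of some finite O-sequence of multiplicity j, then g + C(d-j, 2) is the genus of some finite O-sequence of multiplicity d. Equivalently, G_d ⊇ ⋃_{j=1}^{d-1} ( G_j + C(d-j,2) ), where G_m denotes the set of genera of finite O-sequences of multiplicity m. -/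
/-! Adding `1` to the entries `h_1, …, h_k` of an O-sequence `h`, where `k = d - j`, raises the
multiplicity by `k` and the genus by `0 + 1 + ⋯ + (k - 1) = C(k, 2)`. The result is again an
O-sequence because `a ↦ a^⟨t⟩` is strictly increasing for `t ≥ 1`: when the leading index of the
binomial expansion does not move, this is induction on `t`, and when it moves, `a + 1` is itself a
binomial coefficient whose Macaulay bound exceeds that of `a`. -/

/-- The leading index `k_{t+1}` in the binomial expansion of `a` in base `t + 1`. -/
def macTop (t a : ℕ) : ℕ := Nat.findGreatest (fun n => n.choose (t + 1) ≤ a) (a + t + 1)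

lemma mac_zero_right (t : ℕ) : mac t 0 = 0 := by
  cases t <;> simp [mac]

lemma mac_succ_of_ne_zero (t : ℕ) {a : ℕ} (ha : a ≠ 0) :
    mac (t + 1) a = (macTop t a + 1).choose (t + 2) + mac t (a - (macTop t a).choose (t + 1)) := by
  rw [mac, if_neg ha]; rfl

lemma lt_add_choose (a t : ℕ) : a < (a + t + 1).choose (t + 1) := by
  induction t with
  | zero => simp
  | succ t ih =>
    rw [show a + (t + 1) + 1 = a + t + 1 + 1 by ring, Nat.choose_succ_succ']
    omega

lemma macTop_mono (t : ℕ) : Monotone (macTop t) :=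
  fun _ _ hab => Nat.findGreatest_mono (fun _ hn => hn.trans hab) (by omega)

lemma macTop_spec (t : ℕ) {a : ℕ} (ha : a ≠ 0) :
    t + 1 ≤ macTop t a ∧ (macTop t a).choose (t + 1) ≤ a ∧ a < (macTop t a + 1).choose (t + 1) := by
  let P : ℕ → Prop := fun n => n.choose (t + 1) ≤ a
  have hP : P (t + 1) := by simp only [P, Nat.choose_self]; omega
  have hspec : P (macTop t a) := Nat.findGreatest_spec (by omega) hP
  have hbound : macTop t a < a + t + 1 := by
    refine lt_of_le_of_ne (Nat.findGreatest_le _) fun heq => ?_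
    have := lt_add_choose a t
    simp only [P, heq] at hspec
    omega
  exact ⟨Nat.le_findGreatest (by omega) hP, hspec,
    not_le.mp (Nat.findGreatest_is_greatest (P := P) (Nat.lt_succ_self _) hbound)⟩

lemma mac_one (a : ℕ) : mac 1 a = (a + 1).choose 2 := by
  rcases eq_or_ne a 0 with rfl | ha
  · rfl
  obtain ⟨-, hle, hlt⟩ := macTop_spec 0 ha
  simp only [zero_add, Nat.choose_one_right] at hle hlt
  rw [mac_succ_of_ne_zero 0 ha, show macTop 0 a = a by omega, mac]
  rfl

lemma mac_lt_choose_succ (t : ℕ) : ∀ {m r : ℕ}, t ≤ m → r < m.choose t →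
    mac t r < (m + 1).choose (t + 1) := by
  induction t with
  | zero => intro m r _ _; simp [mac]
  | succ t ih =>
    intro m r hm hr
    rcases eq_or_ne r 0 with rfl | hr0
    · rw [mac_zero_right]; exact Nat.choose_pos (by omega)
    rw [mac_succ_of_ne_zero t hr0, show t + 1 + 1 = t + 2 from rfl]
    obtain ⟨hN, hle, hlt⟩ := macTop_spec t hr0
    set N := macTop t r
    have hNm : N < m := by
      by_contra!
      have := Nat.choose_le_choose (t + 1) this
      omega
    have hrem : r - N.choose (t + 1) < N.choose t := by
      have := Nat.choose_succ_succ' N t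
      omega
    have hrec := ih (by omega) hrem
    have hpascal : (N + 2).choose (t + 2) = (N + 1).choose (t + 1) + (N + 1).choose (t + 2) :=
      Nat.choose_succ_succ' _ _
    have hmono := Nat.choose_le_choose (t + 2) (show N + 2 ≤ m + 1 by omega)
    omega

lemma strictMono_mac_one : StrictMono (mac 1) := by
  refine strictMono_nat_of_lt_succ fun a => ?_
  have hpascal : (a + 2).choose 2 = (a + 1).choose 1 + (a + 1).choose 2 := Nat.choose_succ_succ' _ _
  rw [mac_one, mac_one, hpascal, Nat.choose_one_right]
  omega

lemma StrictMono.mac_succ {t : ℕ} (ht : StrictMono (mac t)) : StrictMono (mac (t + 1)) := by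
  refine strictMono_nat_of_lt_succ fun a => ?_
  rcases eq_or_ne a 0 with rfl | ha
  · rw [mac_zero_right, zero_add, mac_succ_of_ne_zero t one_ne_zero]
    exact Nat.add_pos_left (Nat.choose_pos (by have := (macTop_spec t one_ne_zero).1; omega)) _
  rw [mac_succ_of_ne_zero t ha, mac_succ_of_ne_zero t (Nat.add_one_ne_zero a)]
  obtain ⟨hN, hle, hlt⟩ := macTop_spec t ha
  obtain ⟨-, hle', -⟩ := macTop_spec t (Nat.add_one_ne_zero a)
  set N := macTop t a
  set N' := macTop t (a + 1)
  have hNN' : N ≤ N' := macTop_mono t (Nat.le_succ a)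
  rcases hNN'.eq_or_lt with heq | hlt'
  · rw [← heq, show a + 1 - N.choose (t + 1) = a - N.choose (t + 1) + 1 by omega]
    exact Nat.add_lt_add_left (ht (Nat.lt_succ_self _)) _
  · -- Here `a + 1 = C(N', t + 1)`, so `mac (t + 1) (a + 1) = C(N' + 1, t + 2) ≥ C(N + 2, t + 2)`.
    have hrem : a - N.choose (t + 1) < N.choose t := by
      have := Nat.choose_succ_succ' N t
      omega
    have hrec := mac_lt_choose_succ t (by omega) hrem
    have hpascal : (N + 2).choose (t + 2) = (N + 1).choose (t + 1) + (N + 1).choose (t + 2) :=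
      Nat.choose_succ_succ' _ _
    have hmono := Nat.choose_le_choose (t + 2) (show N + 2 ≤ N' + 1 by omega)
    have hzero : a + 1 - N'.choose (t + 1) = 0 := by
      have := Nat.choose_le_choose (t + 1) (show N + 1 ≤ N' by omega)
      omega
    rw [hzero, mac_zero_right]
    omega

lemma mac_strictMono {t : ℕ} (ht : 1 ≤ t) : StrictMono (mac t) := by
  induction t, ht using Nat.le_induction with
  | base => exact strictMono_mac_one
  | succ t _ ih => exact ih.mac_succ

namespace IsOSeq

variable {h : ℕ → ℕ} {s : ℕ}

lemma one_le_length (hO : IsOSeq h s) : 1 ≤ s :=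
  (hO.2.1 0).1 (by rw [hO.1]; exact Nat.one_pos)

lemma apply_eq_zero (hO : IsOSeq h s) {i : ℕ} (hi : s ≤ i) : h i = 0 :=
  Nat.eq_zero_of_not_pos fun hpos => (hO.2.1 i).1 hpos |>.not_ge hi

lemma mult_eq_of_le (hO : IsOSeq h s) {n : ℕ} (hn : s ≤ n) : mult h n = mult h s :=
  (Finset.sum_subset (Finset.range_subset_range.2 hn) fun i _ hi =>
    hO.apply_eq_zero (by simpa using hi)).symm

lemma genus_eq_of_le (hO : IsOSeq h s) {n : ℕ} (hn : s ≤ n) : genus h n = genus h s :=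
  (Finset.sum_subset (Finset.range_subset_range.2 hn) fun i _ hi => by
    rw [hO.apply_eq_zero (by simpa using hi), mul_zero]).symm

end IsOSeq

def addOnes (h : ℕ → ℕ) (k : ℕ) : ℕ → ℕ := fun i => h i + if i ∈ Finset.Icc 1 k then 1 else 0

lemma sum_range_ite_mem_Icc {k n : ℕ} (hk : k < n) (f : ℕ → ℕ) :
    ∑ i ∈ Finset.range n, (if i ∈ Finset.Icc 1 k then f i else 0) = ∑ i ∈ Finset.Icc 1 k, f i := by
  rw [Finset.sum_ite_mem, Finset.inter_eq_right.2]
  intro i hi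
  simp only [Finset.mem_Icc, Finset.mem_range] at hi ⊢
  omega

lemma sum_Icc_sub_one (k : ℕ) : ∑ i ∈ Finset.Icc 1 k, (i - 1) = k.choose 2 := by
  rw [← Finset.Ico_add_one_right_eq_Icc, Finset.sum_Ico_eq_sum_range]
  simp [Finset.sum_range_id, Nat.choose_two_right]

lemma mult_addOnes (h : ℕ → ℕ) {k n : ℕ} (hk : k < n) : mult (addOnes h k) n = mult h n + k := by
  simp only [mult, addOnes, Finset.sum_add_distrib, sum_range_ite_mem_Icc hk]
  simp

lemma genus_addOnes (h : ℕ → ℕ) {k n : ℕ} (hk : k < n) :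
    genus (addOnes h k) n = genus h n + k.choose 2 := by
  simp only [genus, addOnes, mul_add, Finset.sum_add_distrib, mul_ite, mul_one, mul_zero,
    sum_range_ite_mem_Icc hk, sum_Icc_sub_one]

lemma isOSeq_addOnes {h : ℕ → ℕ} {s : ℕ} (hO : IsOSeq h s) (k : ℕ) :
    IsOSeq (addOnes h k) (max s (k + 1)) := by
  have hs := hO.one_le_length
  obtain ⟨h0, hpos, hmac⟩ := hO
  refine ⟨by simp [addOnes, h0], fun i => ?_, fun t ht => ?_⟩
  · have := hpos i
    simp only [addOnes, Finset.mem_Icc]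
    split_ifs <;> omega
  · have hle := hmac t ht
    simp only [addOnes, Finset.mem_Icc]
    by_cases htk : t + 1 ≤ k
    · rw [if_pos (by omega), if_pos (by omega)]
      exact hle.trans_lt (mac_strictMono ht (Nat.lt_succ_self _))
    · rw [if_neg (by omega), add_zero]
      exact hle.trans ((mac_strictMono ht).monotone (Nat.le_add_right _ _))

theorem stmt16_general (d j : ℕ) (hj2 : j ≤ d - 1) :
    ∀ g ∈ GSet j, g + Nat.choose (d - j) 2 ∈ GSet d := by
  rintro g ⟨h, s, hO, hmult, rfl⟩
  have hs : s ≤ max s (d - j + 1) := le_max_left _ _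
  have hk : d - j < max s (d - j + 1) := lt_max_of_lt_right (Nat.lt_succ_self _)
  refine ⟨addOnes h (d - j), max s (d - j + 1), isOSeq_addOnes hO _, ?_, ?_⟩
  · rw [mult_addOnes h hk, hO.mult_eq_of_le hs]
    omega
  · rw [genus_addOnes h hk, hO.genus_eq_of_le hs]

/-- For `1 ≤ j ≤ d - 1`: if `g` is the genus of some finite O-sequence of
multiplicity `j`, then `g + C(d-j,2)` is the genus of some finite O-sequence of multiplicity
`d`; i.e. `G_d ⊇ ⋃_{j=1}^{d-1} (G_j + C(d-j,2))`. -/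
theorem stmt16 (d j : ℕ) (hj1 : 1 ≤ j) (hj2 : j ≤ d - 1) :
    ∀ g ∈ GSet j, g + Nat.choose (d - j) 2 ∈ GSet d :=
  stmt16_general d j hj2
end

section
/- For every integer d ≥ 18, the quantity m_d satisfies m_d ≥ C(⌈d/2⌉ + 1, 2). -/
namespace List

variable {α β : Type*} [Preorder α] {f : α → β → α}

theorem le_foldl_of_le_self (hf : ∀ a b, a ≤ f a b) (l : List β) (a : α) : a ≤ l.foldl f a := by
  induction l generalizing a with
  | nil => exact le_rfl
  | cons b l ih => exact (hf a b).trans (ih (f a b))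

theorem le_foldl_of_mem (hf : ∀ a b, a ≤ f a b) {l : List β} {b : β} (hb : b ∈ l) {a c : α}
    (hc : ∀ a', a ≤ a' → c ≤ f a' b) : c ≤ l.foldl f a := by
  induction l generalizing a with
  | nil => simp at hb
  | cons b' l ih =>
    rcases mem_cons.mp hb with rfl | hb
    · exact (hc a le_rfl).trans (le_foldl_of_le_self hf l _)
    · exact ih hb fun a' ha' => hc a' ((hf a b').trans ha')

end List

theorem mListAux_getD (n i : ℕ) : (mListAux n).getD i 0 = mSeq (n - i) := by
  induction n generalizing i with
  | zero => simp [mListAux, mSeq]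
  | succ n ih =>
    cases i with
    | zero => rfl
    | succ i =>
      show (mListAux n).getD i 0 = _
      rw [ih, Nat.add_sub_add_right]

/-- One step of the recursion for `m_d`; `a k` stands for `m_{d-k}`. -/
def mMove (a : ℕ → ℕ) (M k : ℕ) : ℕ :=
  if Nat.choose k 2 - 1 ≤ M then max M (a k + Nat.choose k 2) else M

theorem le_mMove (a : ℕ → ℕ) (M k : ℕ) : M ≤ mMove a M k := by
  unfold mMove; split <;> simp

theorem mSeq_succ {n : ℕ} (hn : n ≠ 0) :
    mSeq (n + 1) = (List.range' 2 (n - 1)).foldl (mMove fun k => mSeq (n - (k - 1))) (mSeq n) := by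
  show (mListAux (n + 1)).getD 0 0 = _
  simp only [mListAux, List.getD_cons_zero, if_neg hn, mListAux_getD, Nat.sub_zero]
  rfl

theorem mSeq_monotone : Monotone mSeq := by
  refine monotone_nat_of_le_succ fun n => ?_
  rcases Nat.eq_zero_or_pos n with rfl | hn
  · decide
  · rw [mSeq_succ hn.ne']
    exact List.le_foldl_of_le_self (le_mMove _) _ _

theorem mSeq_sub_add_choose_le {d k : ℕ} (hk : 2 ≤ k) (hkd : k < d)
    (h : Nat.choose k 2 - 1 ≤ mSeq (d - 1)) : mSeq (d - k) + Nat.choose k 2 ≤ mSeq d := by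
  obtain ⟨n, rfl⟩ : ∃ n, d = n + 1 := ⟨d - 1, by omega⟩
  rw [mSeq_succ (by omega)]
  refine List.le_foldl_of_mem (le_mMove _) (b := k) (List.mem_range'_1.mpr (by omega))
    fun M hM => ?_
  rw [mMove, if_pos (h.trans hM), show n - (k - 1) = n + 1 - k by omega]
  exact le_max_right _ _

theorem succ_le_mSeq {n : ℕ} (hn : 9 ≤ n) : n + 1 ≤ mSeq n := by
  induction n using Nat.strong_induction_on with
  | _ n ih =>
    by_cases hsmall : n < 12
    · interval_cases n <;> decide
    have hprev := ih (n - 1) (by omega) (by omega)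
    have hmove := mSeq_sub_add_choose_le (d := n) (k := 3) (by norm_num) (by omega)
      (by rw [show Nat.choose 3 2 = 3 from rfl]; omega)
    have := ih (n - 3) (by omega) (by omega)
    rw [show Nat.choose 3 2 = 3 from rfl] at hmove
    omega

theorem choose_le_mSeq_two_mul_add_one {m : ℕ} (hm : 9 ≤ m)
    (h : Nat.choose (m + 1) 2 ≤ mSeq (2 * m)) : Nat.choose (m + 2) 2 ≤ mSeq (2 * m + 1) := by
  have hmove := mSeq_sub_add_choose_le (d := 2 * m + 1) (k := m + 1) (by omega) (by omega)
    (by rw [Nat.add_sub_cancel]; exact tsub_le_self.trans h)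
  rw [show 2 * m + 1 - (m + 1) = m by omega] at hmove
  calc Nat.choose (m + 2) 2 = m + 1 + Nat.choose (m + 1) 2 := by
        rw [Nat.choose_succ_succ, Nat.choose_one_right]
    _ ≤ mSeq m + Nat.choose (m + 1) 2 := Nat.add_le_add_right (succ_le_mSeq hm) _
    _ ≤ mSeq (2 * m + 1) := hmove

set_option maxRecDepth 10000 in
theorem choose_le_mSeq_two_mul {m : ℕ} (hm : 9 ≤ m) : Nat.choose (m + 1) 2 ≤ mSeq (2 * m) := by
  induction m, hm using Nat.le_induction with
  | base => decide
  | succ m hm ih =>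
    exact (choose_le_mSeq_two_mul_add_one hm ih).trans (mSeq_monotone (by omega))

/-- For every `d ≥ 18`, `m_d ≥ C(⌈d/2⌉ + 1, 2)`. -/
theorem stmt18 (d : ℕ) (hd : 18 ≤ d) : Nat.choose ((d + 1) / 2 + 1) 2 ≤ mSeq d := by
  obtain ⟨m, rfl | rfl⟩ := Nat.even_or_odd' d
  · rw [show (2 * m + 1) / 2 = m by omega]
    exact choose_le_mSeq_two_mul (by omega)
  · rw [show (2 * m + 1 + 1) / 2 = m + 1 by omega]
    exact choose_le_mSeq_two_mul_add_one (by omega) (choose_le_mSeq_two_mul (by omega))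
end
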